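/- Let 0 ≤ t ≤ f ≤ n, let F be a flag of size f with t labeled vertices, let Θ: {1,…,t} → {1,…,n} be injective, and fix any h* ∈ Inj_Θ(F). Let x^m := Π_{{a,b} ∈ E(F)} x_{h*(a)h*(b)}, and let H ≤ S_n be the subgroup of all permutations of {1,…,n} that fix Θ(i) for every 1 ≤ i ≤ t (so |H| = (n−t)!). Then g_F^Θ = ((n−t)!/(n−f)!) · (1/|H|) Σ_{σ ∈ H} σ·x^m; equivalently, (n−f)! · g_F^Θ = Σ_{σ ∈ H} σ·x^m. -/

import Mathlib

open MvPolynomial Finset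
open scoped Classical

noncomputable section

abbrev PolyRing (n : ℕ) := MvPolynomial (Sym2 (Fin n)) ℝ

def xe {n : ℕ} (i j : Fin n) : PolyRing n := X s(i, j)

def permAct {n : ℕ} (σ : Equiv.Perm (Fin n)) : PolyRing n →ₐ[ℝ] PolyRing n :=
  MvPolynomial.rename (Sym2.map σ)

def injOn (t f n : ℕ) (htf : t ≤ f) (Θ : Fin t → Fin n) : Finset (Fin f → Fin n) :=
  Finset.univ.filter fun h => Function.Injective h ∧ ∀ i : Fin t, h (Fin.castLE htf i) = Θ i

def edgePairs {f : ℕ} (F : SimpleGraph (Fin f)) : Finset (Fin f × Fin f) :=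
  Finset.univ.filter fun p => p.1 < p.2 ∧ F.Adj p.1 p.2

def gF {t f n : ℕ} (htf : t ≤ f) (F : SimpleGraph (Fin f)) (Θ : Fin t → Fin n) : PolyRing n :=
  ∑ h ∈ injOn t f n htf Θ, ∏ p ∈ edgePairs F, xe (h p.1) (h p.2)

/-!
The map `σ ↦ σ ∘ h*` sends the stabiliser `H` of `Θ` onto the injections extending `Θ`, and its
fibre over `h` is a coset of the pointwise stabiliser of the range of `h*`, i.e. of a copy of the
symmetric group on the `n - f` remaining points. Since `σ · x^m` is the monomial of `σ ∘ h*`,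
summing over `H` counts every term of `g_F^Θ` exactly `(n - f)!` times; the same count with `f`
replaced by `t` gives `|H| = (n - t)!`.
-/

open Equiv Function
open scoped Nat

section PermutationsExtendingInjections

variable {α β : Type*} [Fintype α] [DecidableEq α] [Fintype β]

theorem card_perm_fixing_range {u : β → α} (hu : Injective u) :
    #{σ : Perm α | ∀ b, σ (u b) = u b} = (Fintype.card α - Fintype.card β)! := by
  have hcompl : Fintype.card {a // a ∉ Set.range u} = Fintype.card α - Fintype.card β := by
    rw [Fintype.card_subtype_compl, Set.card_range_of_injective hu]
  rw [← hcompl, ← Fintype.card_perm, ← Fintype.card_coe]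
  refine Fintype.card_congr ((Equiv.subtypeEquivRight fun σ => ?_).trans
    (Perm.subtypeEquivSubtypePerm (· ∉ Set.range u)).symm)
  simp only [mem_filter, mem_univ, true_and, not_not, Set.forall_mem_range]

theorem card_perm_comp_eq {u v : β → α} (hu : Injective u) (hv : Injective v) :
    #{σ : Perm α | ∀ b, σ (u b) = v b} = (Fintype.card α - Fintype.card β)! := by
  obtain ⟨τ, hτ⟩ := Perm.exists_extending_pair u v hu hv
  rw [← card_perm_fixing_range hu]
  refine card_nbij' (τ⁻¹ * ·) (τ * ·) ?_ ?_ ?_ ?_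
  · intro σ hσ
    simp_all [Equiv.symm_apply_eq]
  · intro σ hσ
    simp_all
  · intro σ _; simp
  · intro σ _; simp

theorem sum_perm_fixing_comp_eq_nsmul {γ M : Type*} [Fintype γ] [DecidableEq β] [AddCommMonoid M]
    (j : γ → β) (θ : γ → α) {u : β → α} (hu : Injective u) (huθ : ∀ c, u (j c) = θ c)
    (w : (β → α) → M) :
    ∑ σ ∈ {σ : Perm α | ∀ c, σ (θ c) = θ c}, w (σ ∘ u) =
      (Fintype.card α - Fintype.card β)! •
        ∑ h ∈ {h : β → α | Injective h ∧ ∀ c, h (j c) = θ c}, w h := by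
  have hmaps : ∀ σ ∈ ({σ : Perm α | ∀ c, σ (θ c) = θ c} : Finset _),
      ⇑σ ∘ u ∈ ({h : β → α | Injective h ∧ ∀ c, h (j c) = θ c} : Finset _) := by
    intro σ hσ
    simp only [mem_filter, mem_univ, true_and, comp_apply, huθ] at hσ ⊢
    exact ⟨σ.injective.comp hu, hσ⟩
  rw [← sum_fiberwise_of_maps_to hmaps, smul_sum]
  refine Finset.sum_congr rfl fun h hh => ?_
  simp only [mem_filter, mem_univ, true_and] at hh
  have hfiber : ({σ : Perm α | ∀ c, σ (θ c) = θ c} : Finset _).filter (fun σ : Perm α => ⇑σ ∘ u = h)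
      = ({σ : Perm α | ∀ b, σ (u b) = h b} : Finset _) := by
    ext σ
    simp only [mem_filter, mem_univ, true_and, _root_.funext_iff, comp_apply]
    exact ⟨And.right, fun hσ => ⟨fun c => by rw [← huθ, hσ, hh.2, huθ], hσ⟩⟩
  rw [Finset.sum_congr rfl fun σ hσ => by rw [(mem_filter.1 hσ).2], sum_const, hfiber,
    card_perm_comp_eq hu hh.1]

end PermutationsExtendingInjections

theorem permAct_xe {n : ℕ} (σ : Perm (Fin n)) (i j : Fin n) :
    permAct σ (xe i j) = xe (σ i) (σ j) := by
  simp [permAct, xe]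

theorem stmt4_general (n t f : ℕ) (htf : t ≤ f)
    (F : SimpleGraph (Fin f))
    (Θ : Fin t → Fin n) (hΘ : Function.Injective Θ)
    (hstar : Fin f → Fin n) (hmem : hstar ∈ injOn t f n htf Θ)
    -- `H ≤ S_n` is the subgroup of permutations fixing `Θ(i)` for every `i`
    (H : Finset (Equiv.Perm (Fin n)))
    (hH : H = Finset.univ.filter (fun σ : Equiv.Perm (Fin n) => ∀ i : Fin t, σ (Θ i) = Θ i))
    -- `x^m` is the monomial of `F` built from `h*`
    (xm : PolyRing n) (hxm : xm = ∏ p ∈ edgePairs F, xe (hstar p.1) (hstar p.2)) :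
    gF htf F Θ =
      (((n - t).factorial : ℝ) / ((n - f).factorial : ℝ)) •
        (((H.card : ℝ))⁻¹ • ∑ σ ∈ H, permAct σ xm) ∧
    ((n - f).factorial : ℝ) • gF htf F Θ = ∑ σ ∈ H, permAct σ xm := by
  obtain ⟨hstar_inj, hstar_ext⟩ := (mem_filter.mp hmem).2
  -- each `congr` below only reconciles the decidability instances of two equal filters
  have hsum : ∑ σ ∈ H, permAct σ xm = (n - f)! • gF htf F Θ := by
    subst hH hxm
    simp only [map_prod, permAct_xe]
    convert sum_perm_fixing_comp_eq_nsmul (Fin.castLE htf) Θ hstar_inj hstar_ext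
      (fun h => ∏ p ∈ edgePairs F, xe (h p.1) (h p.2)) using 2
    · congr
    · rfl
    · simp
    · rw [gF, injOn]
      congr
  have hcard : H.card = (n - t)! := by
    subst hH
    convert card_perm_fixing_range hΘ using 2
    · congr
    · simp
  have hmain : ((n - f)! : ℝ) • gF htf F Θ = ∑ σ ∈ H, permAct σ xm := by
    rw [hsum, Nat.cast_smul_eq_nsmul]
  refine ⟨?_, hmain⟩
  rw [← hmain, hcard, smul_smul, smul_smul]
  field_simp
  rw [one_smul]

theorem stmt4 (n t f : ℕ) (htf : t ≤ f) (hfn : f ≤ n)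
    (F : SimpleGraph (Fin f))
    (Θ : Fin t → Fin n) (hΘ : Function.Injective Θ)
    (hstar : Fin f → Fin n) (hmem : hstar ∈ injOn t f n htf Θ)
    -- `H ≤ S_n` is the subgroup of permutations fixing `Θ(i)` for every `i`
    (H : Finset (Equiv.Perm (Fin n)))
    (hH : H = Finset.univ.filter (fun σ : Equiv.Perm (Fin n) => ∀ i : Fin t, σ (Θ i) = Θ i))
    -- `x^m` is the monomial of `F` built from `h*`
    (xm : PolyRing n) (hxm : xm = ∏ p ∈ edgePairs F, xe (hstar p.1) (hstar p.2)) :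
    gF htf F Θ =
      (((n - t).factorial : ℝ) / ((n - f).factorial : ℝ)) •
        (((H.card : ℝ))⁻¹ • ∑ σ ∈ H, permAct σ xm) ∧
    ((n - f).factorial : ℝ) • gF htf F Θ = ∑ σ ∈ H, permAct σ xm :=
  stmt4_general n t f htf F Θ hΘ hstar hmem H hH xm hxm
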